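/- Let H and G be simple graphs, a ≠ b two vertices of H, and f : H → G a graph homomorphism with f(a) = f(b). Suppose that for every digraph D without isolated points, every graph homomorphism χ : H → D ⋆ H satisfying f_D ∘ χ = f equals φ_{(u,v)} for some (u,v) ∈ E(D). Then for all digraphs D₁ and D₂ without isolated points and every graph homomorphism χ : D₁ ⋆ H → D₂ ⋆ H satisfying f_{D₁} = f_{D₂} ∘ χ, the restriction of χ to D₁ is a digraph homomorphism h : D₁ → D₂ and χ = h ⋆ H. (Hence the arrow construction is a full and faithful functor from digraphs without isolated points to Gra/G.) -/

import Mathlib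

/-! Every copy `φ_{(u,v)}(H)` of `H` in `D₁ ⋆ H` (a homomorphism because `f a = f b` forces
`a` and `b` to be non-adjacent) is carried by `χ` to a homomorphism `H → D₂ ⋆ H` over `G`, hence,
by the rigidity hypothesis, onto a copy `φ_{(u',v')}(H)`. Reading off the values at `a` and `b`
gives `u' = χ u` and `v' = χ v`. As every vertex of `D₁` lies on an edge, `χ` maps `D₁` into
`D₂`, the restriction is a digraph homomorphism `h`, and `χ` agrees with `h ⋆ H` on every copy
of `H`, hence everywhere. -/

open SimpleGraph

attribute [local instance] Classical.propDecidable

/-- The vertex set of the arrow construction `D ⋆ H`: the disjoint union of `D` and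
`E(D) × (V(H) ∖ {a, b})`, where `E(D)` is the set of edges of the digraph `(D, E)` and
`a`, `b` are the two distinguished vertices of `H`. -/
def starVert (V : Type*) (a b : V) (D : Type*) (E : D → D → Prop) : Type _ :=
  D ⊕ ({p : D × D // E p.1 p.2} × {x : V // x ≠ a ∧ x ≠ b})

/-- For an edge `(u, v)` of the digraph `(D, E)`, the map
`φ_{(u,v)} : V(H) → V(D ⋆ H)` sending `a ↦ u`, `b ↦ v`, and `x ↦ (u, v, x)` otherwise. -/
noncomputable def starPhi {V : Type*} (a b : V) {D : Type*} {E : D → D → Prop}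
    (u v : D) (huv : E u v) (x : V) : starVert V a b D E :=
  if hx : x = a then Sum.inl u
  else if hx' : x = b then Sum.inl v
  else Sum.inr (⟨(u, v), huv⟩, ⟨x, hx, hx'⟩)

/-- The arrow construction `D ⋆ H` for a simple graph `H` with distinguished vertices
`a`, `b` and a digraph `(D, E)`: the edges are exactly the pairs
`(φ_{(u,v)} s, φ_{(u,v)} t)` for `(u, v) ∈ E(D)` and `(s, t) ∈ E(H)`. -/
noncomputable def starGraph {V : Type*} (H : SimpleGraph V) (a b : V)
    (D : Type*) (E : D → D → Prop) : SimpleGraph (starVert V a b D E) :=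
  SimpleGraph.fromRel (fun x y => ∃ (u v : D) (huv : E u v) (s t : V),
    H.Adj s t ∧ starPhi a b u v huv s = x ∧ starPhi a b u v huv t = y)

/-- Given a vertex map `f : V(H) → V(G)` (intended to satisfy `f a = f b`), the map
`f_D : V(D ⋆ H) → V(G)` sending every vertex of `D` to `f a` and `(u, v, y) ↦ f y`. -/
def starMap {V W : Type*} (f : V → W) (a b : V) {D : Type*} {E : D → D → Prop} :
    starVert V a b D E → W :=
  Sum.elim (fun _ => f a) (fun p => f p.2.val)

/-- Given a digraph homomorphism `h : (D₁, E₁) → (D₂, E₂)`, the map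
`h ⋆ H : V(D₁ ⋆ H) → V(D₂ ⋆ H)` sending `x ↦ h x` for `x ∈ D₁` and
`(u, v, w) ↦ (h u, h v, w)`. -/
def starMapHom {V : Type*} (a b : V) {D₁ D₂ : Type*}
    {E₁ : D₁ → D₁ → Prop} {E₂ : D₂ → D₂ → Prop}
    (h : D₁ → D₂) (hh : ∀ u v, E₁ u v → E₂ (h u) (h v)) :
    starVert V a b D₁ E₁ → starVert V a b D₂ E₂ :=
  Sum.elim (fun x => Sum.inl (h x))
    (fun p => Sum.inr (⟨(h p.1.val.1, h p.1.val.2), hh _ _ p.1.prop⟩, p.2))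

section starPhi

variable {V : Type*} {a b : V} {D : Type*} {E : D → D → Prop} {u v : D} (huv : E u v)

lemma starPhi_a : starPhi a b u v huv a = Sum.inl u := by
  simp [starPhi, starVert]

lemma starPhi_b (hab : a ≠ b) : starPhi a b u v huv b = Sum.inl v := by
  simp [starPhi, starVert, hab.symm]

lemma starPhi_of_ne {x : V} (hxa : x ≠ a) (hxb : x ≠ b) :
    starPhi a b u v huv x = Sum.inr (⟨(u, v), huv⟩, ⟨x, hxa, hxb⟩) := by
  simp [starPhi, starVert, hxa, hxb]

-- `φ_{(u,v)}` identifies `a` and `b` when `u = v`.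
lemma starPhi_ne_starPhi {s t : V} (hst : s ≠ t) (hab : s(s, t) ≠ s(a, b)) :
    starPhi a b u v huv s ≠ starPhi a b u v huv t := by
  by_cases hsa : s = a <;> by_cases hsb : s = b <;> by_cases hta : t = a <;>
    by_cases htb : t = b <;> subst_vars <;> simp_all [starPhi, starVert, Sym2.eq_swap]

lemma starGraph_adj_starPhi {H : SimpleGraph V} (hnab : ¬ H.Adj a b) {s t : V}
    (hst : H.Adj s t) :
    (starGraph H a b D E).Adj (starPhi a b u v huv s) (starPhi a b u v huv t) := by
  refine (SimpleGraph.fromRel_adj _ _ _).2 ⟨starPhi_ne_starPhi huv hst.ne fun hst' => ?_,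
    Or.inl ⟨u, v, huv, s, t, hst, rfl, rfl⟩⟩
  rw [← H.mem_edgeSet, hst'] at hst
  exact hnab hst

lemma starMap_starPhi {W : Type*} {f : V → W} (hf : f a = f b) (x : V) :
    starMap f a b (starPhi a b u v huv x) = f x := by
  by_cases hxa : x = a <;> by_cases hxb : x = b <;> subst_vars <;>
    simp_all [starMap, starPhi]

end starPhi

lemma exists_eq_starMapHom {V : Type*} {a b : V} (hab : a ≠ b)
    {D₁ D₂ : Type*} {E₁ : D₁ → D₁ → Prop} {E₂ : D₂ → D₂ → Prop}
    (hD₁ : ∀ d : D₁, ∃ d', E₁ d d' ∨ E₁ d' d)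
    {χ : starVert V a b D₁ E₁ → starVert V a b D₂ E₂}
    (hχ : ∀ u v (huv : E₁ u v), ∃ (u' v' : D₂) (huv' : E₂ u' v'),
      χ ∘ starPhi a b u v huv = starPhi a b u' v' huv') :
    ∃ (h : D₁ → D₂) (hh : ∀ u v, E₁ u v → E₂ (h u) (h v)),
      (∀ x : D₁, χ (Sum.inl x) = Sum.inl (h x)) ∧ χ = starMapHom a b h hh := by
  have hinl : ∀ d, ∃ d₂, χ (Sum.inl d) = Sum.inl d₂ := by
    intro d
    obtain ⟨d', hd | hd⟩ := hD₁ d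
    · obtain ⟨u', _, _, hcopy⟩ := hχ d d' hd
      exact ⟨u', by simpa [starPhi_a] using congrFun hcopy a⟩
    · obtain ⟨_, v', _, hcopy⟩ := hχ d' d hd
      exact ⟨v', by simpa [starPhi_b _ hab] using congrFun hcopy b⟩
  choose h hχh using hinl
  have hcopy_eq : ∀ u v (huv : E₁ u v), ∃ huv' : E₂ (h u) (h v),
      χ ∘ starPhi a b u v huv = starPhi a b (h u) (h v) huv' := by
    intro u v huv
    obtain ⟨u', v', huv', hcopy⟩ := hχ u v huv
    have hu := congrFun hcopy a
    have hv := congrFun hcopy b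
    rw [Function.comp_apply, starPhi_a, starPhi_a, hχh] at hu
    rw [Function.comp_apply, starPhi_b _ hab, starPhi_b _ hab, hχh] at hv
    obtain rfl := Sum.inl.inj hu
    obtain rfl := Sum.inl.inj hv
    exact ⟨huv', hcopy⟩
  choose hh hχφ using hcopy_eq
  refine ⟨h, hh, hχh, funext ?_⟩
  rintro (d | ⟨⟨⟨u, v⟩, huv⟩, ⟨y, hya, hyb⟩⟩)
  · exact hχh d
  · have hy := congrFun (hχφ u v huv) y
    rw [Function.comp_apply, starPhi_of_ne huv hya hyb, starPhi_of_ne _ hya hyb] at hy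
    exact hy

/-- Let `H`, `G` be simple graphs, `a ≠ b` two vertices of `H`, and `f : H → G` a graph
homomorphism with `f a = f b`. Suppose that for every digraph without isolated points,
every graph homomorphism `χ : H → D ⋆ H` with `f_D ∘ χ = f` equals `φ_{(u,v)}` for some edge
`(u, v)` of `D`. Then for all digraphs `D₁`, `D₂` without isolated points and every graph
homomorphism `χ : D₁ ⋆ H → D₂ ⋆ H` with `f_{D₁} = f_{D₂} ∘ χ`, the restriction of `χ` to
`D₁` is a digraph homomorphism `h : D₁ → D₂` and `χ = h ⋆ H`. (Hence the arrow construction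
is a full and faithful functor from digraphs without isolated points to `Gra/G`.) -/
theorem stmt9 {V W : Type*} (H : SimpleGraph V) (G : SimpleGraph W)
    (a b : V) (hab : a ≠ b) (f : H →g G) (hf : f a = f b)
    (hyp : ∀ (D : Type w) (E : D → D → Prop), (∀ d : D, ∃ d', E d d' ∨ E d' d) →
      ∀ χ : V → starVert V a b D E,
        (∀ s t : V, H.Adj s t → (starGraph H a b D E).Adj (χ s) (χ t)) →
        (∀ x : V, starMap (⇑f) a b (χ x) = f x) →
        ∃ (u v : D) (huv : E u v), χ = starPhi a b u v huv)
    (D₁ D₂ : Type w) (E₁ : D₁ → D₁ → Prop) (E₂ : D₂ → D₂ → Prop)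
    (hD₁ : ∀ d : D₁, ∃ d', E₁ d d' ∨ E₁ d' d) (hD₂ : ∀ d : D₂, ∃ d', E₂ d d' ∨ E₂ d' d)
    (χ : starVert V a b D₁ E₁ → starVert V a b D₂ E₂)
    (hom : ∀ x y, (starGraph H a b D₁ E₁).Adj x y →
      (starGraph H a b D₂ E₂).Adj (χ x) (χ y))
    (hcomp : ∀ x, starMap (⇑f) a b x = starMap (⇑f) a b (χ x)) :
    ∃ (h : D₁ → D₂) (hh : ∀ u v, E₁ u v → E₂ (h u) (h v)),
      (∀ x : D₁, χ (Sum.inl x) = Sum.inl (h x)) ∧ χ = starMapHom a b h hh := by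
  have hnab : ¬ H.Adj a b := fun h => G.ne_of_adj (f.map_adj h) hf
  refine exists_eq_starMapHom hab hD₁ fun u v huv => hyp D₂ E₂ hD₂ _
    (fun s t hst => hom _ _ (starGraph_adj_starPhi huv hnab hst)) fun x => ?_
  rw [Function.comp_apply, ← hcomp, starMap_starPhi huv hf]
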